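/- Let G be a finite nonempty interval graph and v a vertex of G such that no vertex of the closed neighborhood N[v] is simplicial in G. Then N[v] is a separator of G: the graph G − N[v] is disconnected (it is nonempty and not connected). -/

import Mathlib

/-- A graph is an interval graph if each vertex can be assigned a (nonempty) closed real
interval such that two distinct vertices are adjacent iff their intervals intersect. -/
def IsIntervalGraph {V : Type*} (G : SimpleGraph V) : Prop :=
  ∃ f : V → Set ℝ,
    (∀ v, ∃ a b : ℝ, a ≤ b ∧ f v = Set.Icc a b) ∧
    ∀ u v : V, u ≠ v → (G.Adj u v ↔ (f u ∩ f v).Nonempty)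

/-- A hole is an induced (chordless) cycle on at least 4 vertices, identified
with its vertex set. -/
def IsHole {V : Type*} (G : SimpleGraph V) (H : Set V) : Prop :=
  ∃ m : ℕ, 4 ≤ m ∧ ∃ f : ZMod m → V,
    Function.Injective f ∧ Set.range f = H ∧
      ∀ i j : ZMod m, G.Adj (f i) (f j) ↔ (j = i + 1 ∨ i = j + 1)

/-- A minimal forbidden set: the induced subgraph is not interval, but every
proper subset induces an interval graph. -/
def IsMinimalForbidden {V : Type*} (G : SimpleGraph V) (X : Set V) : Prop :=
  ¬ IsIntervalGraph (G.induce X) ∧ ∀ Y : Set V, Y ⊂ X → IsIntervalGraph (G.induce Y)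

/-- A graph is prereduced if it has no minimal forbidden set of at most 10 vertices. -/
def Prereduced {V : Type*} (G : SimpleGraph V) : Prop :=
  ∀ X : Set V, X.ncard ≤ 10 → ¬ IsMinimalForbidden G X

/-- A module: any two vertices of `M` have exactly the same neighbors outside `M`. -/
def IsGraphModule {V : Type*} (G : SimpleGraph V) (M : Set V) : Prop :=
  ∀ u ∈ M, ∀ v ∈ M, ∀ x ∉ M, (G.Adj u x ↔ G.Adj v x)

/-- A graph is reduced if it is prereduced and every nontrivial module induces a clique. -/
def Reduced {V : Type*} [Fintype V] (G : SimpleGraph V) : Prop :=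
  Prereduced G ∧
    ∀ M : Set V, IsGraphModule G M → 1 < M.ncard → M.ncard < Fintype.card V →
      G.IsClique M

/-- Closed neighborhood `N[v]`. -/
def closedNbhd {V : Type*} (G : SimpleGraph V) (v : V) : Set V :=
  insert v (G.neighborSet v)

/-- Closed neighborhood of a set, `N[U] = ⋃ v ∈ U, N[v]`. -/
def closedNbhdSet {V : Type*} (G : SimpleGraph V) (U : Set V) : Set V :=
  ⋃ v ∈ U, closedNbhd G v

/-- The set of common neighbors of a vertex set `X`. -/
def commonNbrs {V : Type*} (G : SimpleGraph V) (X : Set V) : Set V :=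
  {v | ∀ x ∈ X, G.Adj v x}

/-- `P` induces a chordless path: it can be enumerated so that adjacency holds
exactly between consecutive vertices. -/
def IsInducedPath {V : Type*} (G : SimpleGraph V) (P : Set V) : Prop :=
  ∃ n : ℕ, ∃ f : Fin (n + 1) → V, Function.Injective f ∧ Set.range f = P ∧
    ∀ i j : Fin (n + 1), G.Adj (f i) (f j) ↔ (i.val + 1 = j.val ∨ j.val + 1 = i.val)

/-- A shallow terminal: a vertex `s` contained in a minimal forbidden set `W` that is
not a hole, such that `W \ N[s]` induces a chordless path. -/
def ShallowTerminal {V : Type*} (G : SimpleGraph V) (s : V) : Prop :=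
  ∃ W : Set V, IsMinimalForbidden G W ∧ s ∈ W ∧ ¬ IsHole G W ∧
    IsInducedPath G (W \ closedNbhd G s)

/-- A hole cover: a vertex set intersecting every hole. -/
def HoleCover {V : Type*} (G : SimpleGraph V) (C : Set V) : Prop :=
  ∀ H : Set V, IsHole G H → (C ∩ H).Nonempty

/-- A minimal hole cover: a hole cover no proper subset of which is a hole cover. -/
def MinimalHoleCover {V : Type*} (G : SimpleGraph V) (C : Set V) : Prop :=
  HoleCover G C ∧ ∀ C' : Set V, C' ⊂ C → ¬ HoleCover G C'

/-- An interval deletion set: a vertex set whose removal leaves an interval graph. -/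
def IntervalDeletionSet {V : Type*} (G : SimpleGraph V) (Q : Set V) : Prop :=
  IsIntervalGraph (G.induce Qᶜ)

/-- A minimum interval deletion set. -/
def MinIntervalDeletionSet {V : Type*} (G : SimpleGraph V) (Q : Set V) : Prop :=
  IntervalDeletionSet G Q ∧
    ∀ Q' : Set V, IntervalDeletionSet G Q' → Q.ncard ≤ Q'.ncard

/-- Two holes are congenial if each is contained in the closed neighborhood of the other. -/
def Congenial {V : Type*} (G : SimpleGraph V) (H₁ H₂ : Set V) : Prop :=
  H₁ ⊆ closedNbhdSet G H₂ ∧ H₂ ⊆ closedNbhdSet G H₁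

/-- The graph `G − S`: edges of `G` with both endpoints outside `S`
(vertices of `S` become isolated). -/
def deleteSet {V : Type*} (G : SimpleGraph V) (S : Set V) : SimpleGraph V where
  Adj u v := G.Adj u v ∧ u ∉ S ∧ v ∉ S
  symm := ⟨fun u v h => ⟨h.1.symm, h.2.2, h.2.1⟩⟩
  loopless := ⟨fun v h => G.irrefl h.1⟩

/-! Take an interval model and the vertices `p`, whose interval ends first, and `q`, whose
interval starts last. Both are simplicial, so neither lies in `N[v]`; hence `p` lies entirely
to the left of the interval of `v` and `q` entirely to its right. Removing `N[v]` deletes every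
interval meeting that of `v`, so no edge of `G − N[v]` crosses it, and `p`, `q` are separated. -/

def IsIntervalModel {V : Type*} (G : SimpleGraph V) (a b : V → ℝ) : Prop :=
  (∀ u, a u ≤ b u) ∧ ∀ u w, u ≠ w → (G.Adj u w ↔ a u ≤ b w ∧ a w ≤ b u)

theorem IsIntervalGraph.exists_isIntervalModel {V : Type*} {G : SimpleGraph V}
    (hG : IsIntervalGraph G) : ∃ a b : V → ℝ, IsIntervalModel G a b := by
  obtain ⟨f, hf, hadj⟩ := hG
  choose a b hab hfab using hf
  refine ⟨a, b, hab, fun u w huw => ?_⟩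
  rw [hadj u w huw, hfab, hfab, Set.Icc_inter_Icc, Set.nonempty_Icc, max_le_iff, le_min_iff,
    le_min_iff]
  exact ⟨fun h => ⟨h.1.2, h.2.1⟩, fun h => ⟨⟨hab u, h.1⟩, ⟨h.2, hab w⟩⟩⟩

namespace IsIntervalModel

variable {V : Type*} {G : SimpleGraph V} {a b : V → ℝ}

/-- Reflecting the real line turns left ends into right ends. -/
theorem neg (hM : IsIntervalModel G a b) : IsIntervalModel G (-b) (-a) := by
  refine ⟨fun u => neg_le_neg (hM.1 u), fun u w huw => ?_⟩
  simp only [Pi.neg_apply, neg_le_neg_iff, hM.2 u w huw]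
  exact and_comm

theorem isClique_neighborSet_of_forall_le (hM : IsIntervalModel G a b) {p : V}
    (hp : ∀ w, b p ≤ b w) : G.IsClique (G.neighborSet p) := by
  intro u (hu : G.Adj p u) w (hw : G.Adj p w) huw
  have hpu := (hM.2 p u hu.ne).mp hu
  have hpw := (hM.2 p w hw.ne).mp hw
  exact (hM.2 u w huw).mpr ⟨hpu.2.trans (hp w), hpw.2.trans (hp u)⟩

theorem lt_or_lt_of_notMem_closedNbhd (hM : IsIntervalModel G a b) {u v : V}
    (hu : u ∉ closedNbhd G v) : b u < a v ∨ b v < a u := by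
  have huv : u ≠ v := fun h => hu (h ▸ Set.mem_insert u _)
  have hnadj : ¬ G.Adj u v := fun h => hu (Set.mem_insert_of_mem v h.symm)
  by_contra! h
  exact hnadj ((hM.2 u v huv).mpr ⟨h.2, h.1⟩)

theorem not_adj_of_lt_of_lt (hM : IsIntervalModel G a b) {x y v : V}
    (hx : b x < a v) (hy : b v < a y) : ¬ G.Adj x y := by
  intro hxy
  have := ((hM.2 x y hxy.ne).mp hxy).2
  linarith [hM.1 v]

theorem exists_notMem_closedNbhd_lt [Finite V] (hM : IsIntervalModel G a b) (v : V)
    (hsimp : ∀ u ∈ closedNbhd G v, ¬ G.IsClique (G.neighborSet u)) :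
    ∃ p ∉ closedNbhd G v, b p < a v := by
  have : Nonempty V := ⟨v⟩
  obtain ⟨p, hp⟩ := Finite.exists_min b
  have hpN : p ∉ closedNbhd G v := fun h => hsimp p h (hM.isClique_neighborSet_of_forall_le hp)
  refine ⟨p, hpN, (hM.lt_or_lt_of_notMem_closedNbhd hpN).resolve_right fun h => ?_⟩
  linarith [hM.1 p, hp v]

theorem exists_notMem_closedNbhd_gt [Finite V] (hM : IsIntervalModel G a b) (v : V)
    (hsimp : ∀ u ∈ closedNbhd G v, ¬ G.IsClique (G.neighborSet u)) :
    ∃ q ∉ closedNbhd G v, b v < a q := by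
  obtain ⟨q, hq, hlt⟩ := hM.neg.exists_notMem_closedNbhd_lt v hsimp
  exact ⟨q, hq, neg_lt_neg_iff.mp hlt⟩

theorem not_preconnected_induce_compl_closedNbhd (hM : IsIntervalModel G a b) {v p q : V}
    (hp : p ∉ closedNbhd G v) (hq : q ∉ closedNbhd G v) (hpv : b p < a v) (hqv : b v < a q) :
    ¬ (G.induce (closedNbhd G v)ᶜ).Preconnected := by
  intro hconn
  obtain ⟨walk⟩ := hconn ⟨p, hp⟩ ⟨q, hq⟩
  have hqv' : ¬ b q < a v := by linarith [hM.1 v, hM.1 q]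
  obtain ⟨d, -, hleft, hright⟩ := walk.exists_boundary_dart {x | b x < a v} hpv hqv'
  have hright' := (hM.lt_or_lt_of_notMem_closedNbhd d.snd.2).resolve_left hright
  exact hM.not_adj_of_lt_of_lt hleft hright' (SimpleGraph.comap_adj.mp d.adj)

end IsIntervalModel

theorem stmt_19_general {V : Type*} [Fintype V] (G : SimpleGraph V)
    (hG : IsIntervalGraph G) (v : V)
    (hsimp : ∀ u ∈ closedNbhd G v, ¬ G.IsClique (G.neighborSet u)) :
    ((closedNbhd G v)ᶜ : Set V).Nonempty ∧
      ¬ (G.induce ((closedNbhd G v)ᶜ)).Preconnected := by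
  obtain ⟨a, b, hM⟩ := hG.exists_isIntervalModel
  obtain ⟨p, hp, hpv⟩ := hM.exists_notMem_closedNbhd_lt v hsimp
  obtain ⟨q, hq, hqv⟩ := hM.exists_notMem_closedNbhd_gt v hsimp
  exact ⟨⟨p, hp⟩, hM.not_preconnected_induce_compl_closedNbhd hp hq hpv hqv⟩

/-- In a finite nonempty interval graph, if no vertex of `N[v]` is
simplicial, then `N[v]` is a separator: `G − N[v]` is nonempty and disconnected. -/
theorem stmt_19 {V : Type*} [Fintype V] [Nonempty V] (G : SimpleGraph V)
    (hG : IsIntervalGraph G) (v : V)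
    (hsimp : ∀ u ∈ closedNbhd G v, ¬ G.IsClique (G.neighborSet u)) :
    ((closedNbhd G v)ᶜ : Set V).Nonempty ∧
      ¬ (G.induce ((closedNbhd G v)ᶜ)).Preconnected :=
  stmt_19_general G hG v hsimp
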